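/- arXiv:2102.10630 — 9 statements merged into one kernel-verified Lean document; each statement's English description precedes it below -/
import Mathlib

section
/- Let X be a nonnegative random variable with support (0,l) and cumulative distribution function F, and let α > 0. Define ξ_α(x) = (1/Γ(α+1)) ∫_x^l [−ln F(t)]^α dt and assume ξ_α(x) < ∞ for all x in (0,l). Then the fractional generalized cumulative entropy satisfies CE_α(X) = E[ξ_α(X)]. -/
open MeasureTheory Set
open scoped ProbabilityTheory

/-- For a nonnegative random variable `X` with support `(0,l)` and CDF `F`,
and `α > 0`, setting `ξ_α(x) = (1/Γ(α+1)) ∫_x^l (−ln F t)^α dt` (assumed finite on `(0,l)`),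
the fractional generalized cumulative entropy satisfies `CE_α(X) = E[ξ_α(X)]`. -/
theorem fgce_eq_expectation_xi
    {Ω : Type*} [MeasureSpace Ω] [IsProbabilityMeasure (ℙ : Measure Ω)]
    (X : Ω → ℝ) (hX : Measurable X)
    (l : ℝ) (hl : 0 < l)
    (hXnn : ∀ ω, 0 ≤ X ω)
    (hsupp : ∀ᵐ ω ∂ℙ, X ω ∈ Set.Ioo 0 l)
    (F : ℝ → ℝ) (hF : ∀ x, F x = (ℙ {ω | X ω ≤ x}).toReal)
    (α : ℝ) (hα : 0 < α)
    (ξ : ℝ → ℝ)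
    (hξ : ∀ x, ξ x =
      (1 / Real.Gamma (α + 1)) * ∫ t in Set.Ioo x l, (-Real.log (F t)) ^ α)
    (hfin : ∀ x ∈ Set.Ioo (0:ℝ) l,
      IntegrableOn (fun t => (-Real.log (F t)) ^ α) (Set.Ioo x l)) :
    (1 / Real.Gamma (α + 1)) * ∫ x in Set.Ioo (0:ℝ) l, F x * (-Real.log (F x)) ^ α
      = ∫ ω, ξ (X ω) ∂ℙ := by
  set c : ℝ := 1 / Real.Gamma (α + 1) with hc
  set g : ℝ → ℝ := fun t => (-Real.log (F t)) ^ α with hg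
  have hFmono : Monotone F := by
    intro a b hab
    rw [hF a, hF b]
    exact ENNReal.toReal_mono (measure_ne_top _ _)
      (measure_mono fun ω h => le_trans h hab)
  have hFmeas : Measurable F := hFmono.measurable
  have hFnn : ∀ t, 0 ≤ F t := fun t => by rw [hF]; exact ENNReal.toReal_nonneg
  have hFle1 : ∀ t, F t ≤ 1 := fun t => by
    rw [hF]
    exact ENNReal.toReal_le_of_le_ofReal zero_le_one (by simpa using prob_le_one)
  have hgnn : ∀ t, 0 ≤ g t := fun t =>
    Real.rpow_nonneg (neg_nonneg.2 (Real.log_nonpos (hFnn t) (hFle1 t))) α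
  have hgmeas : Measurable g := by
    have h1 : Measurable fun x => -Real.log (F x) := (Real.measurable_log.comp hFmeas).neg
    rw [hg]; fun_prop
  set h : ℝ → ENNReal := fun t => ENNReal.ofReal (g t) with hh
  have hhmeas : Measurable h := by rw [hh]; fun_prop
  set L : ℝ → ENNReal := fun a => ∫⁻ t in Set.Ioo (0:ℝ) l, (Set.Ici a).indicator h t with hL
  -- measurability of L
  have hLmeas : Measurable L := by
    apply Measurable.lintegral_prod_right (f := fun a t => (Set.Ici a).indicator h t)
    have : (Function.uncurry fun a t => (Set.Ici a).indicator h t)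
        = {p : ℝ × ℝ | p.1 ≤ p.2}.indicator (fun p => h p.2) := by
      ext p
      simp [Function.uncurry, Set.indicator_apply, Set.mem_Ici, Set.mem_setOf_eq]
    rw [this]
    exact (hhmeas.comp measurable_snd).indicator
      (measurableSet_le measurable_fst measurable_snd)
  -- value of L on (0, l)
  have hLa : ∀ a ∈ Set.Ioo (0:ℝ) l, L a = ENNReal.ofReal (∫ t in Set.Ioo a l, g t) := by
    intro a ha
    have h1 : L a = ∫⁻ t in Set.Ici a ∩ Set.Ioo 0 l, h t := by
      simp only [hL]
      rw [lintegral_indicator measurableSet_Ici, Measure.restrict_restrict measurableSet_Ici]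
    have h2 : Set.Ici a ∩ Set.Ioo 0 l = Set.Ico a l := by
      ext t
      simp only [Set.mem_inter_iff, Set.mem_Ici, Set.mem_Ioo, Set.mem_Ico]
      exact ⟨fun ⟨h1, h2, h3⟩ => ⟨h1, h3⟩, fun ⟨h1, h2⟩ => ⟨h1, lt_of_lt_of_le ha.1 h1, h2⟩⟩
    have h3 : ∫⁻ t in Set.Ico a l, h t = ∫⁻ t in Set.Ioo a l, h t :=
      setLIntegral_congr (MeasureTheory.Ioo_ae_eq_Ico (μ := volume) (a := a) (b := l)).symm
    rw [h1, h2, h3]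
    exact (ofReal_integral_eq_lintegral_ofReal (hfin a ha)
      (Filter.Eventually.of_forall fun t => hgnn t)).symm
  -- a.e. identity for ξ ∘ X
  have hae : ∀ᵐ ω ∂ℙ, ξ (X ω) = c * (L (X ω)).toReal := by
    filter_upwards [hsupp] with ω hω
    rw [hξ, hLa _ hω, ENNReal.toReal_ofReal (integral_nonneg fun t => hgnn t)]
  -- RHS as a lintegral
  have hRHS : ∫ ω, ξ (X ω) ∂ℙ = c * (∫⁻ ω, L (X ω) ∂ℙ).toReal := by
    rw [integral_congr_ae hae, integral_const_mul]
    congr 1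
    refine integral_toReal ((hLmeas.comp hX).aemeasurable) ?_
    filter_upwards [hsupp] with ω hω
    rw [hLa _ hω]
    exact ENNReal.ofReal_lt_top
  -- LHS as a lintegral
  have hLHS : ∫ x in Set.Ioo (0:ℝ) l, F x * g x
      = (∫⁻ x in Set.Ioo (0:ℝ) l, ENNReal.ofReal (F x * g x)).toReal :=
    integral_eq_lintegral_of_nonneg_ae
      (Filter.Eventually.of_forall fun x => mul_nonneg (hFnn x) (hgnn x))
      ((hFmeas.mul hgmeas).aestronglyMeasurable)
  -- Tonelli
  have key : ∫⁻ x in Set.Ioo (0:ℝ) l, ENNReal.ofReal (F x * g x) = ∫⁻ ω, L (X ω) ∂ℙ := by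
    have hswap := lintegral_lintegral_swap (μ := ℙ) (ν := volume.restrict (Set.Ioo (0:ℝ) l))
      (f := fun ω t => (Set.Ici (X ω)).indicator h t) ?_
    · have hinner : ∀ t, ∫⁻ ω, (Set.Ici (X ω)).indicator h t ∂ℙ
          = ENNReal.ofReal (F t * g t) := by
        intro t
        have : (fun ω => (Set.Ici (X ω)).indicator h t)
            = fun ω => ({ω | X ω ≤ t}).indicator (fun _ => h t) ω := by
          ext ω
          simp [Set.indicator_apply, Set.mem_Ici, Set.mem_setOf_eq]
        rw [this, lintegral_indicator_const (s := {ω | X ω ≤ t})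
          (show MeasurableSet {ω | X ω ≤ t} from hX measurableSet_Iic)]
        rw [hh]
        have hFt : ℙ {ω | X ω ≤ t} = ENNReal.ofReal (F t) := by
          rw [hF]
          exact (ENNReal.ofReal_toReal (measure_ne_top _ _)).symm
        rw [hFt, ← ENNReal.ofReal_mul (hgnn t), mul_comm (g t) (F t)]
      calc ∫⁻ x in Set.Ioo (0:ℝ) l, ENNReal.ofReal (F x * g x)
          = ∫⁻ t in Set.Ioo (0:ℝ) l, ∫⁻ ω, (Set.Ici (X ω)).indicator h t ∂ℙ := by
            exact lintegral_congr fun t => (hinner t).symm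
        _ = ∫⁻ ω, L (X ω) ∂ℙ := hswap.symm
    · have : (Function.uncurry fun (ω : Ω) (t : ℝ) => (Set.Ici (X ω)).indicator h t)
          = {p : Ω × ℝ | X p.1 ≤ p.2}.indicator (fun p => h p.2) := by
        ext p
        simp [Function.uncurry, Set.indicator_apply, Set.mem_Ici, Set.mem_setOf_eq]
      rw [this]
      exact ((hhmeas.comp measurable_snd).indicator
        (measurableSet_le (hX.comp measurable_fst) measurable_snd)).aemeasurable
  rw [hRHS, ← key, ← hLHS]
end

section
/- Let X be a nonnegative absolutely continuous random variable with cumulative distribution function F and support (0,l), where either 0 < l < +∞, or l = +∞ and lim_{x→+∞} x [−ln F(x)]^α = 0 for each relevant α. Under the proportional reversed hazard model F_{X_θ}(x) = [F(x)]^θ, θ > 0, and with ℰ_θ(α) := (1/Γ(α)) E[ X_θ (−ln F_{X_θ}(X_θ))^{α−1} ], the recurrence CE_{α+1}(X_θ) = ℰ_θ(α) − ℰ_θ(α+2) − CE_α(X_θ) holds for all α > 0. -/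
/-!
Let `G` be the (continuous) distribution function of `X_θ`. By the probability integral
transform `G(X_θ)` is uniform on `(0, 1]`, so for `x > 0`
`G(x) (-log G(x))^β = ∫_{G(x)}^1 (β (-log u)^(β-1) - (-log u)^β) du
  = E[1_{X_θ > x} (β (-log G(X_θ))^(β-1) - (-log G(X_θ))^β)]`,
and integrating over `x > 0` (Fubini, `∫_0^∞ 1_{X_θ > x} dx = X_θ`) gives
`∫_0^∞ G (-log G)^β = β E[X_θ (-log G(X_θ))^(β-1)] - E[X_θ (-log G(X_θ))^β]`.
The recurrence is this identity for `β = α` and `β = α + 1`, divided by `Γ(α + 1)` and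
`Γ(α + 2)`. The expectations are finite because `(-log U)^γ` is integrable for `γ > -1` and
`U` uniform, while the factor `X_θ` is bounded when `l < ∞` and is absorbed by
`x (-log F(x))^β → 0` when `l = ∞`.
-/

open MeasureTheory Set
open scoped ProbabilityTheory

/-- Fractional generalized cumulative entropy of a distribution function `G`
over a set `S`. -/
noncomputable def fgceOn (G : ℝ → ℝ) (S : Set ℝ) (α : ℝ) : ℝ :=
  (1 / Real.Gamma (α + 1)) * ∫ x in S, G x * (-Real.log (G x)) ^ α

/-- The quantity `ℰ_θ(α) = (1/Γ(α)) E[ X_θ (−ln F_{X_θ}(X_θ))^{α−1} ]` for the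
proportional reversed hazard model with baseline CDF `F` and parameter `θ`. -/
noncomputable def EthetaPRH {Ω : Type*} [MeasureSpace Ω]
    (Xθ : Ω → ℝ) (F : ℝ → ℝ) (θ α : ℝ) : ℝ :=
  (1 / Real.Gamma α) * ∫ ω, Xθ ω * (-Real.log ((F (Xθ ω)) ^ θ)) ^ (α - 1) ∂ℙ

open Filter Topology ProbabilityTheory

lemma integrableOn_neg_log_rpow {γ : ℝ} (hγ : -1 < γ) :
    IntegrableOn (fun u : ℝ => (-Real.log u) ^ γ) (Ioc 0 1) := by
  have himg : (fun t : ℝ => Real.exp (-t)) '' Ioi 0 = Ioo 0 1 := by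
    rw [← image_image Real.exp Neg.neg, image_neg_Ioi, neg_zero, Real.image_exp_Iio,
      Real.exp_zero]
  have hderiv (t : ℝ) : HasDerivWithinAt (fun t => Real.exp (-t)) (-Real.exp (-t)) (Ioi 0) t := by
    simpa using (hasDerivAt_neg t).exp.hasDerivWithinAt
  -- the substitution `u = exp (-t)` turns this into the integral defining `Γ (γ + 1)`
  rw [integrableOn_Ioc_iff_integrableOn_Ioo, ← himg,
    integrableOn_image_iff_integrableOn_abs_deriv_smul measurableSet_Ioi (fun t _ => hderiv t)
      (fun a _ b _ h => by simpa using h)]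
  refine (Real.GammaIntegral_convergent (by linarith : 0 < γ + 1)).congr_fun
    (fun t _ => ?_) measurableSet_Ioi
  simp [abs_of_pos (Real.exp_pos _)]

lemma tendsto_mul_neg_log_rpow_nhdsGT_zero (β : ℝ) :
    Tendsto (fun u : ℝ => u * (-Real.log u) ^ β) (𝓝[>] 0) (𝓝 0) := by
  refine ((tendsto_rpow_mul_exp_neg_mul_atTop_nhds_zero β 1 one_pos).comp
    (tendsto_neg_atBot_atTop.comp Real.tendsto_log_nhdsGT_zero)).congr'
    (eventually_nhdsWithin_of_forall fun u (hu : 0 < u) => ?_)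
  simp [Real.exp_log hu, mul_comm]

lemma continuousOn_mul_neg_log_rpow {β : ℝ} (hβ : 0 < β) :
    ContinuousOn (fun u : ℝ => u * (-Real.log u) ^ β) (Icc 0 1) := by
  rintro u ⟨hu, -⟩
  rcases hu.eq_or_lt with rfl | hu
  · refine (continuousWithinAt_Ioi_iff_Ici.mp ?_).mono Icc_subset_Ici_self
    simpa [ContinuousWithinAt] using tendsto_mul_neg_log_rpow_nhdsGT_zero β
  · exact (continuousAt_id.mul ((Real.continuousAt_log hu.ne').neg.rpow_const
      (Or.inr hβ.le))).continuousWithinAt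

lemma hasDerivAt_mul_neg_log_rpow {β u : ℝ} (hu0 : 0 < u) (hu1 : u < 1) :
    HasDerivAt (fun u : ℝ => u * (-Real.log u) ^ β)
      ((-Real.log u) ^ β - β * (-Real.log u) ^ (β - 1)) u := by
  have hlog : 0 < -Real.log u := neg_pos.mpr (Real.log_neg hu0 hu1)
  refine ((hasDerivAt_id' u).mul ((Real.hasDerivAt_log hu0.ne').neg.rpow_const
    (p := β) (Or.inl hlog.ne'))).congr_deriv ?_
  simp only [Pi.neg_apply]
  field_simp
  ring

lemma integral_Ioc_neg_log_rpow_sub {β v : ℝ} (hβ : 0 < β) (hv0 : 0 ≤ v) (hv1 : v ≤ 1) :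
    ∫ u in Ioc v 1, (β * (-Real.log u) ^ (β - 1) - (-Real.log u) ^ β)
      = v * (-Real.log v) ^ β := by
  have hint : IntegrableOn (fun u : ℝ => β * (-Real.log u) ^ (β - 1) - (-Real.log u) ^ β)
      (Ioc v 1) :=
    IntegrableOn.mono_set (((integrableOn_neg_log_rpow (by linarith)).const_mul β).sub
      (integrableOn_neg_log_rpow (by linarith))) (Ioc_subset_Ioc_left hv0)
  have hftc := intervalIntegral.integral_eq_sub_of_hasDeriv_right_of_le hv1
    ((continuousOn_mul_neg_log_rpow hβ).mono (Icc_subset_Icc_left hv0)).neg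
    (fun u hu => (hasDerivAt_mul_neg_log_rpow (hv0.trans_lt hu.1) hu.2).neg.hasDerivWithinAt)
    ((intervalIntegrable_iff_integrableOn_Ioc_of_le hv1).mpr
      (hint.congr_fun (fun u _ => by ring) measurableSet_Ioc))
  rw [intervalIntegral.integral_of_le hv1] at hftc
  simpa [Real.zero_rpow hβ.ne'] using hftc

lemma integral_Ioi_setIntegral_Ioi {μ : Measure ℝ} [SFinite μ] {k : ℝ → ℝ} (hk : Measurable k)
    (hμ : ∀ᵐ y ∂μ, 0 ≤ y) (hint : Integrable (fun y => y * k y) μ) :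
    ∫ x in Ioi 0, ∫ y in Ioi x, k y ∂μ = ∫ y, y * k y ∂μ := by
  have hsection (g : ℝ → ℝ) (y : ℝ) :
      (fun x => (Ioi x).indicator g y) = (Iio y).indicator fun _ => g y := by
    ext x; simp [indicator_apply]
  have hslice (g : ℝ → ℝ) {y : ℝ} (hy : 0 ≤ y) :
      ∫ x in Ioi 0, (Ioi x).indicator g y = y * g y := by
    rw [hsection, integral_indicator_const _ measurableSet_Iio, measureReal_restrict_apply
      measurableSet_Iio, Iio_inter_Ioi, Real.volume_real_Ioo_of_le hy, sub_zero, smul_eq_mul]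
  have hm : Measurable (Function.uncurry fun x y => (Ioi x).indicator k y) := by
    have : (Function.uncurry fun x y => (Ioi x).indicator k y)
        = {p : ℝ × ℝ | p.1 < p.2}.indicator fun p => k p.2 := by
      ext ⟨x, y⟩; simp [indicator_apply]
    rw [this]
    exact (hk.comp measurable_snd).indicator (measurableSet_lt measurable_fst measurable_snd)
  have hprod : Integrable (Function.uncurry fun x y => (Ioi x).indicator k y)
      ((volume.restrict (Ioi 0)).prod μ) := by
    refine (integrable_prod_iff' hm.aestronglyMeasurable).2 ⟨ae_of_all _ fun y => ?_, ?_⟩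
    · simp only [Function.uncurry_apply_pair]
      rw [hsection, integrable_indicator_iff measurableSet_Iio]
      refine integrableOn_const ?_
      rw [Measure.restrict_apply measurableSet_Iio, Iio_inter_Ioi]
      exact measure_Ioo_lt_top.ne
    · refine hint.norm.congr ?_
      filter_upwards [hμ] with y hy
      simp only [Function.uncurry_apply_pair, norm_indicator_eq_indicator_norm]
      rw [hslice _ hy, norm_mul, Real.norm_of_nonneg hy]
  simp_rw [← integral_indicator measurableSet_Ioi (μ := μ)]
  rw [integral_integral_swap hprod]
  exact integral_congr_ae (hμ.mono fun y hy => hslice k hy)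

lemma continuous_setIntegral_Iio {f : ℝ → ℝ} (hf : Integrable f) :
    Continuous fun x => ∫ t in Iio x, f t :=
  continuous_iff_continuousAt.2 fun x =>
    hf.integrableOn.continuousOn_Iic_primitive_Iio.continuousAt (Iic_mem_nhds (lt_add_one x))

lemma neg_log_rpow_rpow {a θ β : ℝ} (ha₀ : 0 ≤ a) (ha₁ : a ≤ 1) (hθ : 0 < θ) (hβ : 0 < β) :
    (-Real.log (a ^ θ)) ^ β = θ ^ β * (-Real.log a) ^ β := by
  rcases ha₀.eq_or_lt with rfl | ha₀
  · simp [Real.zero_rpow hθ.ne', Real.zero_rpow hβ.ne']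
  · rw [Real.log_rpow ha₀, ← mul_neg,
      Real.mul_rpow hθ.le (neg_nonneg.2 (Real.log_nonpos ha₀.le ha₁))]

lemma Filter.Tendsto.mul_neg_log_rpow_rpow {F : ℝ → ℝ} {θ β : ℝ} (hF₀ : ∀ x, 0 ≤ F x)
    (hF₁ : ∀ x, F x ≤ 1) (hθ : 0 < θ) (hβ : 0 < β)
    (h : Tendsto (fun x => x * (-Real.log (F x)) ^ β) atTop (𝓝 0)) :
    Tendsto (fun x => x * (-Real.log (F x ^ θ)) ^ β) atTop (𝓝 0) := by
  have h' := h.const_mul (θ ^ β)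
  rw [mul_zero] at h'
  refine h'.congr fun x => ?_
  rw [neg_log_rpow_rpow (hF₀ x) (hF₁ x) hθ hβ]
  ring

lemma fgceOn_eq_of_subset {G : ℝ → ℝ} {S T : Set ℝ} (hT : MeasurableSet T) (hST : S ⊆ T)
    (hG : ∀ x ∈ T \ S, G x = 1) {β : ℝ} (hβ : β ≠ 0) : fgceOn G S β = fgceOn G T β := by
  refine congrArg _ (setIntegral_eq_of_subset_of_forall_sdiff_eq_zero hT hST fun x hx => ?_).symm
  simp [hG x hx, Real.zero_rpow hβ]

namespace ProbabilityTheory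

lemma cdf_map_eq {Ω : Type*} [MeasureSpace Ω] [IsProbabilityMeasure (ℙ : Measure Ω)]
    {X : Ω → ℝ} (hX : Measurable X) {G : ℝ → ℝ} (hG : ∀ x, (ℙ {ω | X ω ≤ x}).toReal = G x) :
    ⇑(cdf ((ℙ : Measure Ω).map X)) = G := by
  have : IsProbabilityMeasure ((ℙ : Measure Ω).map X) :=
    Measure.isProbabilityMeasure_map hX.aemeasurable
  ext x
  rw [cdf_eq_real, map_measureReal_apply hX measurableSet_Iic, ← hG x]
  rfl

@[fun_prop]
lemma measurable_cdf (μ : Measure ℝ) : Measurable (cdf μ) := (cdf μ).mono.measurable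

variable {μ : Measure ℝ} [IsProbabilityMeasure μ]

lemma measure_cdf_preimage_Iic (hμ : Continuous (cdf μ)) {u : ℝ} (hu0 : 0 < u) (hu1 : u < 1) :
    μ (cdf μ ⁻¹' Iic u) = ENNReal.ofReal u := by
  obtain ⟨y, hy⟩ : u ∈ range (cdf μ) := mem_range_of_exists_le_of_exists_ge hμ
    (((tendsto_cdf_atBot μ).eventually (gt_mem_nhds hu0)).exists.imp fun _ => le_of_lt)
    (((tendsto_cdf_atTop μ).eventually (lt_mem_nhds hu1)).exists.imp fun _ => le_of_lt)
  obtain ⟨b, hb⟩ := ((tendsto_cdf_atTop μ).eventually (lt_mem_nhds hu1)).exists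
  set A := cdf μ ⁻¹' Iic u
  have hbdd : BddAbove A := ⟨b, fun a ha => ((cdf μ).mono.reflect_lt (lt_of_le_of_lt ha hb)).le⟩
  have hmem : sSup A ∈ A := (isClosed_Iic.preimage hμ).csSup_mem ⟨y, hy.le⟩ hbdd
  -- a closed lower set of reals that is bounded above is `Iic` of its supremum
  have hA : A = Iic (sSup A) :=
    Subset.antisymm (fun a ha => le_csSup hbdd ha) fun a ha => ((cdf μ).mono ha).trans hmem
  have hsup : cdf μ (sSup A) = u :=
    le_antisymm hmem (hy ▸ (cdf μ).mono (le_csSup hbdd (show y ∈ A from hy.le)))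
  rw [hA, ← ofReal_cdf, hsup]

theorem map_cdf_of_continuous (hμ : Continuous (cdf μ)) :
    μ.map (cdf μ) = volume.restrict (Ioc 0 1) := by
  have hmeas : Measurable (cdf μ) := measurable_cdf μ
  have : IsProbabilityMeasure (μ.map (cdf μ)) :=
    Measure.isProbabilityMeasure_map hmeas.aemeasurable
  refine Measure.ext_of_Iic _ _ fun u => ?_
  rw [Measure.map_apply hmeas measurableSet_Iic, Measure.restrict_apply measurableSet_Iic]
  rcases le_or_gt u 0 with hu0 | hu0
  · rw [(disjoint_left.2 fun y hy hy' => (hy'.1.trans_le (hy.trans hu0)).false).inter_eq,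
      measure_empty]
    refine le_antisymm (ENNReal.le_of_forall_pos_le_add fun ε hε _ => ?_) zero_le
    rw [zero_add]
    rcases lt_or_ge (ε : ℝ) 1 with hε1 | hε1
    · calc μ (cdf μ ⁻¹' Iic u) ≤ μ (cdf μ ⁻¹' Iic ε) :=
            measure_mono (preimage_mono (Iic_subset_Iic.2 (hu0.trans hε.le)))
        _ = ε := by
          rw [measure_cdf_preimage_Iic hμ (NNReal.coe_pos.2 hε) hε1, ENNReal.ofReal_coe_nnreal]
    · exact prob_le_one.trans (by exact_mod_cast hε1)
  rcases lt_or_ge u 1 with hu1 | hu1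
  · rw [measure_cdf_preimage_Iic hμ hu0 hu1, Iic_inter_Ioc_of_le hu1.le, Real.volume_Ioc, sub_zero]
  · rw [preimage_eq_univ_iff.2 fun _ ⟨y, hy⟩ => hy ▸ (cdf_le_one μ y).trans hu1, measure_univ,
      inter_eq_right.2 fun y hy => hy.2.trans hu1, Real.volume_Ioc]
    simp

lemma ae_cdf_mem_Ioo (hμ : Continuous (cdf μ)) : ∀ᵐ y ∂μ, cdf μ y ∈ Ioo 0 1 := by
  refine ae_of_ae_map (measurable_cdf μ).aemeasurable ?_
  rw [map_cdf_of_continuous hμ, ← Measure.restrict_congr_set Ioo_ae_eq_Ioc]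
  exact ae_restrict_mem measurableSet_Ioo

lemma setIntegral_Ioi_comp_cdf (hμ : Continuous (cdf μ)) {k : ℝ → ℝ} (hk : Measurable k)
    (x : ℝ) : ∫ y in Ioi x, k (cdf μ y) ∂μ = ∫ u in Ioc (cdf μ x) 1, k u := by
  have hmeas : Measurable (cdf μ) := measurable_cdf μ
  have hmap := map_cdf_of_continuous hμ
  have hIoc : Ioi (cdf μ x) ∩ Ioc 0 1 = Ioc (cdf μ x) 1 := by
    rw [inter_comm, Ioc_inter_Ioi, sup_eq_right.2 (cdf_nonneg μ x)]
  -- both sets have measure `1 - cdf μ x`, and one contains the other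
  have hae : cdf μ ⁻¹' Ioi (cdf μ x) =ᵐ[μ] Ioi x := by
    refine ae_eq_of_subset_of_measure_ge (fun y hy => (cdf μ).mono.reflect_lt hy) ?_
      (hmeas measurableSet_Ioi).nullMeasurableSet (measure_ne_top _ _)
    rw [← Measure.map_apply hmeas measurableSet_Ioi, hmap, Measure.restrict_apply measurableSet_Ioi,
      hIoc, Real.volume_Ioc, ← compl_Iic, prob_compl_eq_one_sub measurableSet_Iic, ← ofReal_cdf,
      ENNReal.ofReal_sub _ (cdf_nonneg μ x), ENNReal.ofReal_one]
  rw [← setIntegral_congr_set hae, ← setIntegral_map measurableSet_Ioi hk.aestronglyMeasurable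
    hmeas.aemeasurable, hmap, Measure.restrict_restrict measurableSet_Ioi, hIoc]

lemma ae_le_of_cdf_eq_one {b : ℝ} (hb : cdf μ b = 1) : ∀ᵐ y ∂μ, y ≤ b :=
  (ae_mem_iff_measure_eq measurableSet_Iic.nullMeasurableSet).2 (by
    rw [← ofReal_cdf, hb, ENNReal.ofReal_one, measure_univ])

theorem integral_cdf_mul_neg_log_cdf_rpow (hμ : Continuous (cdf μ)) (hnn : ∀ᵐ y ∂μ, 0 ≤ y)
    {β : ℝ} (hβ : 0 < β)
    (h₁ : Integrable (fun y => y * (-Real.log (cdf μ y)) ^ (β - 1)) μ)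
    (h₂ : Integrable (fun y => y * (-Real.log (cdf μ y)) ^ β) μ) :
    ∫ x in Ioi 0, cdf μ x * (-Real.log (cdf μ x)) ^ β
      = β * ∫ y, y * (-Real.log (cdf μ y)) ^ (β - 1) ∂μ
        - ∫ y, y * (-Real.log (cdf μ y)) ^ β ∂μ := by
  set k : ℝ → ℝ := fun u => β * (-Real.log u) ^ (β - 1) - (-Real.log u) ^ β
  have hk : Measurable k := by fun_prop
  have hyk : (fun y => y * k (cdf μ y))
      = fun y => β * (y * (-Real.log (cdf μ y)) ^ (β - 1)) - y * (-Real.log (cdf μ y)) ^ β := by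
    ext y; ring
  calc ∫ x in Ioi 0, cdf μ x * (-Real.log (cdf μ x)) ^ β
      = ∫ x in Ioi 0, ∫ y in Ioi x, k (cdf μ y) ∂μ := by
        congr 1; ext x
        rw [setIntegral_Ioi_comp_cdf hμ hk,
          integral_Ioc_neg_log_rpow_sub hβ (cdf_nonneg μ x) (cdf_le_one μ x)]
    _ = ∫ y, y * k (cdf μ y) ∂μ :=
        integral_Ioi_setIntegral_Ioi (hk.comp (measurable_cdf μ)) hnn
          (hyk ▸ (h₁.const_mul β).sub h₂)
    _ = _ := by rw [hyk, integral_sub (h₁.const_mul β) h₂, integral_const_mul]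

lemma integrable_neg_log_cdf_rpow (hμ : Continuous (cdf μ)) {γ : ℝ} (hγ : -1 < γ) :
    Integrable (fun y => (-Real.log (cdf μ y)) ^ γ) μ := by
  have h := integrableOn_neg_log_rpow hγ
  rw [IntegrableOn, ← map_cdf_of_continuous hμ] at h
  exact (integrable_map_measure (Measurable.aestronglyMeasurable (by fun_prop)) (by fun_prop)).1 h

lemma integrable_mul_neg_log_cdf_rpow_of_ae_le (hμ : Continuous (cdf μ))
    (hnn : ∀ᵐ y ∂μ, 0 ≤ y) {b : ℝ} (hb : ∀ᵐ y ∂μ, y ≤ b) {γ : ℝ} (hγ : -1 < γ) :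
    Integrable (fun y => y * (-Real.log (cdf μ y)) ^ γ) μ := by
  refine ((integrable_neg_log_cdf_rpow hμ hγ).const_mul b).mono'
    (Measurable.aestronglyMeasurable (by fun_prop)) ?_
  filter_upwards [hnn, hb] with y hy0 hyb
  have := Real.rpow_nonneg (neg_nonneg.2 (Real.log_nonpos (cdf_nonneg μ y) (cdf_le_one μ y))) γ
  rw [Real.norm_of_nonneg (mul_nonneg hy0 this)]
  exact mul_le_mul_of_nonneg_right hyb this

lemma integrable_mul_neg_log_cdf_rpow_of_tendsto (hμ : Continuous (cdf μ))
    (hnn : ∀ᵐ y ∂μ, 0 ≤ y) {β γ : ℝ} (hγ : -1 < γ) (hβγ : β < γ + 1)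
    (hlim : Tendsto (fun x => x * (-Real.log (cdf μ x)) ^ β) atTop (𝓝 0)) :
    Integrable (fun y => y * (-Real.log (cdf μ y)) ^ γ) μ := by
  obtain ⟨A, hA⟩ := eventually_atTop.1 (hlim.eventually (eventually_le_nhds one_pos))
  refine (((integrable_neg_log_cdf_rpow hμ hγ).const_mul (max A 0)).add
    (integrable_neg_log_cdf_rpow hμ (by linarith : -1 < γ - β))).mono'
    (Measurable.aestronglyMeasurable (by fun_prop)) ?_
  filter_upwards [hnn, ae_cdf_mem_Ioo hμ] with y hy0 hy
  set a := -Real.log (cdf μ y)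
  have ha : 0 < a := neg_pos.2 (Real.log_neg hy.1 hy.2)
  have haγ : 0 ≤ a ^ γ := Real.rpow_nonneg ha.le γ
  have haγβ : 0 ≤ a ^ (γ - β) := Real.rpow_nonneg ha.le _
  rw [Real.norm_of_nonneg (mul_nonneg hy0 haγ), Pi.add_apply]
  rcases le_or_gt y A with hyA | hyA
  · nlinarith [le_max_left A 0]
  · have hsplit : y * a ^ γ = y * a ^ β * a ^ (γ - β) := by
      rw [mul_assoc, ← Real.rpow_add ha, add_sub_cancel]
    have hya : y * a ^ β ≤ 1 := hA y hyA.le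
    nlinarith [mul_nonneg (le_max_right A 0) haγ]

theorem fgceOn_cdf_add_one (hμ : Continuous (cdf μ)) (hnn : ∀ᵐ y ∂μ, 0 ≤ y) {α : ℝ}
    (hα : 0 < α)
    (hint : ∀ γ : ℝ, -1 < γ → Integrable (fun y => y * (-Real.log (cdf μ y)) ^ γ) μ) :
    fgceOn (cdf μ) (Ioi 0) (α + 1)
      = 1 / Real.Gamma α * ∫ y, y * (-Real.log (cdf μ y)) ^ (α - 1) ∂μ
        - 1 / Real.Gamma (α + 2) * ∫ y, y * (-Real.log (cdf μ y)) ^ (α + 1) ∂μ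
        - fgceOn (cdf μ) (Ioi 0) α := by
  have hα₁ := integral_cdf_mul_neg_log_cdf_rpow hμ hnn hα (hint _ (by linarith))
    (hint _ (by linarith))
  have hα₂ := integral_cdf_mul_neg_log_cdf_rpow hμ hnn (by linarith : 0 < α + 1)
    (hint _ (by linarith)) (hint _ (by linarith))
  rw [add_sub_cancel_right] at hα₂
  have hΓ₁ : Real.Gamma (α + 1) = α * Real.Gamma α := Real.Gamma_add_one hα.ne'
  have hΓ₂ : Real.Gamma (α + 2) = (α + 1) * Real.Gamma (α + 1) := by
    rw [← Real.Gamma_add_one (by linarith), add_assoc, one_add_one_eq_two]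
  have := Real.Gamma_pos_of_pos hα
  rw [fgceOn, fgceOn, hα₁, hα₂, add_assoc, one_add_one_eq_two, hΓ₂, hΓ₁]
  field_simp
  ring

end ProbabilityTheory

theorem fgce_prhm_recurrence_general
    {Ω : Type*} [MeasureSpace Ω] [IsProbabilityMeasure (ℙ : Measure Ω)]
    (F f : ℝ → ℝ) (l : EReal)
    (α θ : ℝ) (hα : 0 < α) (hθ : 0 < θ)
    (hlim : l = ⊤ → ∀ β : ℝ, 0 < β →
      Filter.Tendsto (fun x : ℝ => x * (-Real.log (F x)) ^ β) Filter.atTop (nhds 0))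
    -- the baseline distribution is absolutely continuous with density `f`
    -- supported on `S = {x | 0 < x < l}`
    (hf_nonneg : ∀ x, 0 ≤ f x)
    (hf_supp : ∀ x : ℝ, ¬ (0 < x ∧ (x : EReal) < l) → f x = 0)
    (hf_prob : ∫ x, f x = 1)
    (hF : ∀ x, F x = ∫ t in Set.Iio x, f t)
    -- the random variable `X_θ` with CDF `F^θ`
    (Xθ : Ω → ℝ) (hXθ : Measurable Xθ) (hXθnn : ∀ ω, 0 ≤ Xθ ω)
    (hcdf : ∀ x : ℝ, (ℙ {ω | Xθ ω ≤ x}).toReal = (F x) ^ θ) :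
    fgceOn (fun x => (F x) ^ θ) {x : ℝ | 0 < x ∧ (x : EReal) < l} (α + 1)
      = EthetaPRH Xθ F θ α - EthetaPRH Xθ F θ (α + 2)
        - fgceOn (fun x => (F x) ^ θ) {x : ℝ | 0 < x ∧ (x : EReal) < l} α := by
  have hf : Integrable f := Integrable.of_integral_ne_zero (by simp [hf_prob])
  have hF₀ (x : ℝ) : 0 ≤ F x := hF x ▸ setIntegral_nonneg measurableSet_Iio fun t _ => hf_nonneg t
  have hF₁ (x : ℝ) : F x ≤ 1 :=
    hF x ▸ hf_prob ▸ setIntegral_le_integral hf (ae_of_all _ hf_nonneg)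
  have hFl {x : ℝ} (hx : l ≤ x) : F x = 1 := by
    rw [hF, setIntegral_eq_integral_of_forall_compl_eq_zero (s := Iio x) fun t ht =>
      hf_supp t fun h => ht (EReal.coe_lt_coe_iff.1 (h.2.trans_le hx)), hf_prob]
  set μ : Measure ℝ := (ℙ : Measure Ω).map Xθ
  have : IsProbabilityMeasure μ := Measure.isProbabilityMeasure_map hXθ.aemeasurable
  have hG : (fun x => F x ^ θ) = cdf μ := (cdf_map_eq hXθ hcdf).symm
  have hμ : Continuous (cdf μ) :=
    hG ▸ (funext hF ▸ continuous_setIntegral_Iio hf).rpow_const fun _ => Or.inr hθ.le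
  have hnn : ∀ᵐ y ∂μ, 0 ≤ y :=
    (ae_map_iff hXθ.aemeasurable measurableSet_Ici).2 (ae_of_all _ hXθnn)
  have hint (γ : ℝ) (hγ : -1 < γ) : Integrable (fun y => y * (-Real.log (cdf μ y)) ^ γ) μ := by
    by_cases hl : l = ⊤
    · refine integrable_mul_neg_log_cdf_rpow_of_tendsto hμ hnn hγ (β := (γ + 1) / 2)
        (by linarith) ?_
      simpa only [← hG] using (hlim hl _ (by linarith)).mul_neg_log_rpow_rpow hF₀ hF₁ hθ
        (by linarith)
    · refine integrable_mul_neg_log_cdf_rpow_of_ae_le hμ hnn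
        (ae_le_of_cdf_eq_one (b := l.toReal) ?_) hγ
      simp only [← hG, hFl (EReal.le_coe_toReal hl), Real.one_rpow]
  have hE (β : ℝ) : EthetaPRH Xθ F θ β
      = 1 / Real.Gamma β * ∫ y, y * (-Real.log (cdf μ y)) ^ (β - 1) ∂μ := by
    rw [EthetaPRH, integral_map hXθ.aemeasurable (Measurable.aestronglyMeasurable (by fun_prop))]
    simp only [← hG]
  have hS {β : ℝ} (hβ : β ≠ 0) : fgceOn (cdf μ) {x : ℝ | 0 < x ∧ (x : EReal) < l} β
      = fgceOn (cdf μ) (Ioi 0) β :=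
    fgceOn_eq_of_subset measurableSet_Ioi (fun x hx => hx.1) (fun x ⟨hx, hxl⟩ => by
      simp only [← hG, hFl (not_lt.1 fun h => hxl ⟨hx, h⟩), Real.one_rpow]) hβ
  rw [hG, hS (by linarith), hS hα.ne', hE, hE, fgceOn_cdf_add_one hμ hnn hα hint,
    show α + 2 - 1 = α + 1 by ring]

/-- under the proportional reversed hazard model `F_{X_θ} = F^θ`, where the
baseline CDF `F` is absolutely continuous (with density `f`) with support `(0,l)`, `l`
being finite or `+∞` with `x(−ln F(x))^β → 0` as `x → +∞` for the relevant orders, the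
recurrence `CE_{α+1}(X_θ) = ℰ_θ(α) − ℰ_θ(α+2) − CE_α(X_θ)` holds for all `α > 0`. -/
theorem fgce_prhm_recurrence
    {Ω : Type*} [MeasureSpace Ω] [IsProbabilityMeasure (ℙ : Measure Ω)]
    (F f : ℝ → ℝ) (l : EReal)
    (hl : (∃ lr : ℝ, 0 < lr ∧ l = (lr : EReal)) ∨ l = ⊤)
    (α θ : ℝ) (hα : 0 < α) (hθ : 0 < θ)
    (hlim : l = ⊤ → ∀ β : ℝ, 0 < β →
      Filter.Tendsto (fun x : ℝ => x * (-Real.log (F x)) ^ β) Filter.atTop (nhds 0))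
    -- the baseline distribution is absolutely continuous with density `f`
    -- supported on `S = {x | 0 < x < l}`
    (hf_meas : Measurable f) (hf_nonneg : ∀ x, 0 ≤ f x)
    (hf_pos : ∀ x : ℝ, 0 < x → (x : EReal) < l → 0 < f x)
    (hf_supp : ∀ x : ℝ, ¬ (0 < x ∧ (x : EReal) < l) → f x = 0)
    (hf_prob : ∫ x, f x = 1)
    (hF : ∀ x, F x = ∫ t in Set.Iio x, f t)
    -- the random variable `X_θ` with CDF `F^θ`
    (Xθ : Ω → ℝ) (hXθ : Measurable Xθ) (hXθnn : ∀ ω, 0 ≤ Xθ ω)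
    (hcdf : ∀ x : ℝ, (ℙ {ω | Xθ ω ≤ x}).toReal = (F x) ^ θ) :
    fgceOn (fun x => (F x) ^ θ) {x : ℝ | 0 < x ∧ (x : EReal) < l} (α + 1)
      = EthetaPRH Xθ F θ α - EthetaPRH Xθ F θ (α + 2)
        - fgceOn (fun x => (F x) ^ θ) {x : ℝ | 0 < x ∧ (x : EReal) < l} α :=
  fgce_prhm_recurrence_general F f l α θ hα hθ hlim hf_nonneg hf_supp hf_prob hF Xθ hXθ hXθnn hcdf
end

section
/- Let X be a nonnegative random variable with support (0,l), 0 < l < ∞, cumulative distribution function F, and finite cumulative entropy CE(X) = −∫_0^l F(x) ln F(x) dx. Then CE_α(X) ≤ (l^{1−α}/Γ(α+1)) (CE(X))^α for 0 < α ≤ 1, and CE_α(X) ≥ (l^{1−α}/Γ(α+1)) (CE(X))^α for α ≥ 1. -/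
/-!
Write `φ(t) = -t log t` (`Real.negMulLog`). Since `0 ≤ F ≤ 1`, the integrand `F (-log F)^α`
lies below `φ(F)^α = F^α (-log F)^α` when `α ≤ 1` and above it when `α ≥ 1`. Jensen's inequality
for the concave (resp. convex) power `x ↦ x^α` with respect to the normalized Lebesgue measure on
`(0, l)` compares the average of `φ(F)^α` with the `α`-th power of the average of `φ(F)`; undoing
the normalization produces the factor `l^(1-α)`. All integrals involved are finite, since on
`[0, 1]` both `φ^α` and `t (-log t)^α` are bounded, the latter by `α^α` (substitute `s = t^(1/α)`).
-/

open MeasureTheory Set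
open scoped ProbabilityTheory

namespace Real

theorem mul_inv_mul_rpow {c a : ℝ} (hc : 0 < c) (ha : 0 ≤ a) (p : ℝ) :
    c * (c⁻¹ * a) ^ p = c ^ (1 - p) * a ^ p := by
  rw [mul_rpow (inv_nonneg.2 hc.le) ha, inv_rpow hc.le, rpow_sub hc, rpow_one]
  field_simp

theorem neg_log_rpow_nonneg {t : ℝ} (ht0 : 0 ≤ t) (ht1 : t ≤ 1) (p : ℝ) : 0 ≤ (-log t) ^ p :=
  rpow_nonneg (neg_nonneg.2 (log_nonpos ht0 ht1)) p

theorem negMulLog_rpow {t : ℝ} (ht0 : 0 ≤ t) (ht1 : t ≤ 1) (p : ℝ) :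
    negMulLog t ^ p = t ^ p * (-log t) ^ p := by
  rw [← mul_rpow ht0 (neg_nonneg.2 (log_nonpos ht0 ht1)), negMulLog, neg_mul_comm]

theorem mul_neg_log_rpow_le_negMulLog_rpow {t p : ℝ} (ht0 : 0 ≤ t) (ht1 : t ≤ 1)
    (hp : p ≤ 1) : t * (-log t) ^ p ≤ negMulLog t ^ p := by
  rw [negMulLog_rpow ht0 ht1]
  gcongr
  · exact neg_log_rpow_nonneg ht0 ht1 p
  · exact self_le_rpow_of_le_one ht0 ht1 hp

theorem negMulLog_rpow_le_mul_neg_log_rpow {t p : ℝ} (ht0 : 0 ≤ t) (ht1 : t ≤ 1)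
    (hp : 1 ≤ p) : negMulLog t ^ p ≤ t * (-log t) ^ p := by
  rw [negMulLog_rpow ht0 ht1]
  gcongr
  · exact neg_log_rpow_nonneg ht0 ht1 p
  · exact rpow_le_self_of_le_one ht0 ht1 hp

theorem negMulLog_rpow_le_one {t p : ℝ} (ht0 : 0 ≤ t) (ht1 : t ≤ 1) (hp : 0 ≤ p) :
    negMulLog t ^ p ≤ 1 :=
  rpow_le_one (negMulLog_nonneg ht0 ht1)
    ((negMulLog_le_one_sub_self ht0).trans (by linarith)) hp

theorem mul_neg_log_rpow_le_rpow_self {t p : ℝ} (ht0 : 0 ≤ t) (ht1 : t ≤ 1) (hp : 0 < p) :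
    t * (-log t) ^ p ≤ p ^ p := by
  rcases ht0.eq_or_lt with rfl | ht0
  · simpa using rpow_nonneg hp.le p
  set s := t ^ p⁻¹
  have hs0 : 0 ≤ s := rpow_nonneg ht0.le _
  have hs1 : s ≤ 1 := rpow_le_one ht0.le ht1 (by positivity)
  calc t * (-log t) ^ p = (s * -log t) ^ p := by
        rw [mul_rpow hs0 (neg_nonneg.2 (log_nonpos ht0.le ht1)), rpow_inv_rpow ht0.le hp.ne']
    _ = (p * negMulLog s) ^ p := by
        rw [negMulLog, log_rpow ht0]
        field_simp
    _ = p ^ p * negMulLog s ^ p := mul_rpow hp.le (negMulLog_nonneg hs0 hs1)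
    _ ≤ p ^ p * 1 := by gcongr; exact negMulLog_rpow_le_one hs0 hs1 hp.le
    _ = p ^ p := mul_one _

end Real

open Real

section Jensen

variable {β : Type*} [MeasurableSpace β] {μ : Measure β} [IsFiniteMeasure μ] [NeZero μ]
  {g : β → ℝ} {p : ℝ}

theorem integral_rpow_le_of_le_one (hp0 : 0 ≤ p) (hp1 : p ≤ 1) (hg0 : 0 ≤ᵐ[μ] g)
    (hg : Integrable g μ) (hgp : Integrable (fun x ↦ g x ^ p) μ) :
    ∫ x, g x ^ p ∂μ ≤ μ.real univ ^ (1 - p) * (∫ x, g x ∂μ) ^ p := by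
  have hc : 0 < μ.real univ := measureReal_univ_pos
  have jensen := (concaveOn_rpow hp0 hp1).le_map_average
    (continuous_rpow_const hp0).continuousOn isClosed_Ici hg0 hg hgp
  rw [average_eq, average_eq, smul_eq_mul, smul_eq_mul] at jensen
  rw [← mul_inv_mul_rpow hc (integral_nonneg_of_ae hg0)]
  calc ∫ x, g x ^ p ∂μ = μ.real univ * ((μ.real univ)⁻¹ * ∫ x, g x ^ p ∂μ) := by field_simp
    _ ≤ _ := by gcongr

theorem le_integral_rpow_of_one_le (hp : 1 ≤ p) (hg0 : 0 ≤ᵐ[μ] g)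
    (hg : Integrable g μ) (hgp : Integrable (fun x ↦ g x ^ p) μ) :
    μ.real univ ^ (1 - p) * (∫ x, g x ∂μ) ^ p ≤ ∫ x, g x ^ p ∂μ := by
  have hc : 0 < μ.real univ := measureReal_univ_pos
  have jensen := (convexOn_rpow hp).map_average_le
    (continuous_rpow_const (by linarith)).continuousOn isClosed_Ici hg0 hg hgp
  rw [average_eq, average_eq, smul_eq_mul, smul_eq_mul] at jensen
  rw [← mul_inv_mul_rpow hc (integral_nonneg_of_ae hg0)]
  calc _ ≤ μ.real univ * ((μ.real univ)⁻¹ * ∫ x, g x ^ p ∂μ) := by gcongr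
    _ = ∫ x, g x ^ p ∂μ := by field_simp

end Jensen

section UnitIntervalValued

variable {β : Type*} [MeasurableSpace β] {μ : Measure β} [IsFiniteMeasure μ]
  {F : β → ℝ} {p : ℝ}

theorem integrable_negMulLog_comp_rpow (hF : Measurable F) (hF0 : ∀ x, 0 ≤ F x)
    (hF1 : ∀ x, F x ≤ 1) (hp : 0 ≤ p) : Integrable (fun x ↦ negMulLog (F x) ^ p) μ := by
  refine .of_bound (by fun_prop) 1 (ae_of_all _ fun x ↦ ?_)
  rw [norm_of_nonneg (rpow_nonneg (negMulLog_nonneg (hF0 x) (hF1 x)) p)]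
  exact negMulLog_rpow_le_one (hF0 x) (hF1 x) hp

theorem integrable_negMulLog_comp (hF : Measurable F) (hF0 : ∀ x, 0 ≤ F x)
    (hF1 : ∀ x, F x ≤ 1) : Integrable (fun x ↦ negMulLog (F x)) μ := by
  simpa using integrable_negMulLog_comp_rpow (μ := μ) hF hF0 hF1 zero_le_one

theorem integrable_mul_neg_log_rpow (hF : Measurable F) (hF0 : ∀ x, 0 ≤ F x)
    (hF1 : ∀ x, F x ≤ 1) (hp : 0 < p) : Integrable (fun x ↦ F x * (-log (F x)) ^ p) μ := by
  refine .of_bound (by fun_prop) (p ^ p) (ae_of_all _ fun x ↦ ?_)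
  rw [norm_of_nonneg (mul_nonneg (hF0 x) (neg_log_rpow_nonneg (hF0 x) (hF1 x) p))]
  exact mul_neg_log_rpow_le_rpow_self (hF0 x) (hF1 x) hp

variable [NeZero μ]

theorem integral_mul_neg_log_rpow_le_of_le_one (hF : Measurable F) (hF0 : ∀ x, 0 ≤ F x)
    (hF1 : ∀ x, F x ≤ 1) (hp0 : 0 ≤ p) (hp1 : p ≤ 1) :
    ∫ x, F x * (-log (F x)) ^ p ∂μ ≤ μ.real univ ^ (1 - p) * (∫ x, negMulLog (F x) ∂μ) ^ p :=
  calc ∫ x, F x * (-log (F x)) ^ p ∂μ ≤ ∫ x, negMulLog (F x) ^ p ∂μ :=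
        integral_mono_of_nonneg
          (ae_of_all _ fun x ↦ mul_nonneg (hF0 x) (neg_log_rpow_nonneg (hF0 x) (hF1 x) p))
          (integrable_negMulLog_comp_rpow hF hF0 hF1 hp0)
          (ae_of_all _ fun x ↦ mul_neg_log_rpow_le_negMulLog_rpow (hF0 x) (hF1 x) hp1)
    _ ≤ _ := integral_rpow_le_of_le_one hp0 hp1
        (ae_of_all _ fun x ↦ negMulLog_nonneg (hF0 x) (hF1 x))
        (integrable_negMulLog_comp hF hF0 hF1) (integrable_negMulLog_comp_rpow hF hF0 hF1 hp0)

theorem le_integral_mul_neg_log_rpow_of_one_le (hF : Measurable F) (hF0 : ∀ x, 0 ≤ F x)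
    (hF1 : ∀ x, F x ≤ 1) (hp : 1 ≤ p) :
    μ.real univ ^ (1 - p) * (∫ x, negMulLog (F x) ∂μ) ^ p ≤ ∫ x, F x * (-log (F x)) ^ p ∂μ :=
  calc _ ≤ ∫ x, negMulLog (F x) ^ p ∂μ := le_integral_rpow_of_one_le hp
        (ae_of_all _ fun x ↦ negMulLog_nonneg (hF0 x) (hF1 x))
        (integrable_negMulLog_comp hF hF0 hF1)
        (integrable_negMulLog_comp_rpow hF hF0 hF1 (by linarith))
    _ ≤ ∫ x, F x * (-log (F x)) ^ p ∂μ :=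
        integral_mono (integrable_negMulLog_comp_rpow hF hF0 hF1 (by linarith))
          (integrable_mul_neg_log_rpow hF hF0 hF1 (by linarith))
          fun x ↦ negMulLog_rpow_le_mul_neg_log_rpow (hF0 x) (hF1 x) hp

end UnitIntervalValued

theorem fgce_bound_via_cumulative_entropy_general
    {Ω : Type*} [MeasureSpace Ω] [IsProbabilityMeasure (ℙ : Measure Ω)]
    (X : Ω → ℝ)
    (l : ℝ) (hl : 0 < l)
    (F : ℝ → ℝ) (hF : ∀ x, F x = (ℙ {ω | X ω ≤ x}).toReal)
    (α : ℝ) :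
    (0 < α → α ≤ 1 →
      (1 / Real.Gamma (α + 1)) * ∫ x in Set.Ioo (0:ℝ) l, F x * (-Real.log (F x)) ^ α
        ≤ l ^ (1 - α) / Real.Gamma (α + 1) *
            (-∫ x in Set.Ioo (0:ℝ) l, F x * Real.log (F x)) ^ α)
    ∧ (1 ≤ α →
      (1 / Real.Gamma (α + 1)) * ∫ x in Set.Ioo (0:ℝ) l, F x * (-Real.log (F x)) ^ α
        ≥ l ^ (1 - α) / Real.Gamma (α + 1) *
            (-∫ x in Set.Ioo (0:ℝ) l, F x * Real.log (F x)) ^ α) := by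
  have hF0 (x : ℝ) : 0 ≤ F x := hF x ▸ ENNReal.toReal_nonneg
  have hF1 (x : ℝ) : F x ≤ 1 := hF x ▸ measureReal_le_one
  have hFm : Measurable F := Monotone.measurable fun a b hab ↦ by
    simp only [hF]
    exact ENNReal.toReal_mono (measure_ne_top _ _) (measure_mono fun ω hω ↦ le_trans hω hab)
  have : NeZero (volume.restrict (Ioo (0 : ℝ) l)) := ⟨by simp [hl]⟩
  have hlen : (volume.restrict (Ioo (0 : ℝ) l)).real univ = l := by simp [hl.le]
  have hCE : -∫ x in Ioo 0 l, F x * log (F x) = ∫ x in Ioo 0 l, negMulLog (F x) := by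
    simp [negMulLog, integral_neg]
  rw [hCE, one_div_mul_eq_div, div_mul_eq_mul_div]
  refine ⟨fun hα0 hα1 ↦ ?_, fun hα1 ↦ ?_⟩
  · have h := integral_mul_neg_log_rpow_le_of_le_one (μ := volume.restrict (Ioo 0 l))
      hFm hF0 hF1 hα0.le hα1
    rw [hlen] at h
    gcongr
  · have h := le_integral_mul_neg_log_rpow_of_one_le (μ := volume.restrict (Ioo 0 l))
      hFm hF0 hF1 hα1
    rw [hlen] at h
    gcongr

/-- for a nonnegative random variable `X` with support `(0,l)`, `0 < l < ∞`,
CDF `F`, and finite cumulative entropy `CE(X) = −∫_0^l F ln F`, one has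
`CE_α(X) ≤ (l^{1−α}/Γ(α+1)) (CE(X))^α` for `0 < α ≤ 1` and the reverse inequality
for `α ≥ 1`. -/
theorem fgce_bound_via_cumulative_entropy
    {Ω : Type*} [MeasureSpace Ω] [IsProbabilityMeasure (ℙ : Measure Ω)]
    (X : Ω → ℝ) (hX : Measurable X)
    (l : ℝ) (hl : 0 < l)
    (hXnn : ∀ ω, 0 ≤ X ω)
    (hsupp : ∀ᵐ ω ∂ℙ, X ω ∈ Set.Ioo 0 l)
    (F : ℝ → ℝ) (hF : ∀ x, F x = (ℙ {ω | X ω ≤ x}).toReal)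
    (hCEfin : IntegrableOn (fun x => F x * Real.log (F x)) (Set.Ioo (0:ℝ) l))
    (α : ℝ) :
    (0 < α → α ≤ 1 →
      (1 / Real.Gamma (α + 1)) * ∫ x in Set.Ioo (0:ℝ) l, F x * (-Real.log (F x)) ^ α
        ≤ l ^ (1 - α) / Real.Gamma (α + 1) *
            (-∫ x in Set.Ioo (0:ℝ) l, F x * Real.log (F x)) ^ α)
    ∧ (1 ≤ α →
      (1 / Real.Gamma (α + 1)) * ∫ x in Set.Ioo (0:ℝ) l, F x * (-Real.log (F x)) ^ α
        ≥ l ^ (1 - α) / Real.Gamma (α + 1) *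
            (-∫ x in Set.Ioo (0:ℝ) l, F x * Real.log (F x)) ^ α) :=
  fgce_bound_via_cumulative_entropy_general X l hl F hF α
end

section
/- Let X be a random variable with support (0,l), cumulative distribution function F, and finite CE_α(X) for α > 0. Then CE_α(X) ≥ (1/Γ(α+1)) ∫_0^l F(x) [1 − F(x)]^α dx. -/
open MeasureTheory Set
open scoped ProbabilityTheory

/-- for a random variable `X` with support `(0,l)`, CDF `F`, and finite
`CE_α(X)` for `α > 0`, one has
`CE_α(X) ≥ (1/Γ(α+1)) ∫_0^l F(x) (1 − F(x))^α dx`. -/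
theorem fgce_lower_bound_one_minus_F
    {Ω : Type*} [MeasureSpace Ω] [IsProbabilityMeasure (ℙ : Measure Ω)]
    (X : Ω → ℝ) (hX : Measurable X)
    (l : ℝ) (hl : 0 < l)
    (hsupp : ∀ᵐ ω ∂ℙ, X ω ∈ Set.Ioo 0 l)
    (F : ℝ → ℝ) (hF : ∀ x, F x = (ℙ {ω | X ω ≤ x}).toReal)
    (α : ℝ) (hα : 0 < α)
    (hCEfin : IntegrableOn (fun x => F x * (-Real.log (F x)) ^ α) (Set.Ioo (0:ℝ) l)) :
    (1 / Real.Gamma (α + 1)) * ∫ x in Set.Ioo (0:ℝ) l, F x * (-Real.log (F x)) ^ α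
      ≥ (1 / Real.Gamma (α + 1)) * ∫ x in Set.Ioo (0:ℝ) l, F x * (1 - F x) ^ α := by
  have hF0 : ∀ x, 0 ≤ F x := fun x => by rw [hF]; exact ENNReal.toReal_nonneg
  have hF1 : ∀ x, F x ≤ 1 := by
    intro x
    rw [hF]
    calc (ℙ {ω | X ω ≤ x}).toReal ≤ (1 : ENNReal).toReal :=
        ENNReal.toReal_mono ENNReal.one_ne_top prob_le_one
      _ = 1 := ENNReal.toReal_one
  have hFmono : Monotone F := by
    intro a b hab
    rw [hF, hF]
    exact ENNReal.toReal_mono (measure_ne_top _ _)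
      (measure_mono (fun ω hω => le_trans hω hab))
  have hFmeas : Measurable F := hFmono.measurable
  -- pointwise inequality
  have hpt : ∀ x, F x * (1 - F x) ^ α ≤ F x * (-Real.log (F x)) ^ α := by
    intro x
    rcases eq_or_lt_of_le (hF0 x) with h0 | h0
    · rw [← h0]; simp
    · have hlog : 1 - F x ≤ -Real.log (F x) := by
        have := Real.add_one_le_exp (Real.log (F x))
        rw [Real.exp_log h0] at this
        linarith
      have h1 : (0:ℝ) ≤ 1 - F x := by linarith [hF1 x]
      exact mul_le_mul_of_nonneg_left (Real.rpow_le_rpow h1 hlog hα.le) (hF0 x)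
  -- integrability of the right-hand integrand
  have hgmeas : Measurable fun x => F x * (1 - F x) ^ α :=
    hFmeas.mul ((Real.continuous_rpow_const hα.le).measurable.comp (measurable_const.sub hFmeas))
  have hgint : IntegrableOn (fun x => F x * (1 - F x) ^ α) (Set.Ioo (0:ℝ) l) := by
    apply Measure.integrableOn_of_bounded (M := 1)
    · exact (measure_Ioo_lt_top).ne
    · exact hgmeas.aestronglyMeasurable
    · refine Filter.Eventually.of_forall fun x => ?_
      have h1 : (0:ℝ) ≤ 1 - F x := by linarith [hF1 x]
      have h2 : (1 - F x) ^ α ≤ 1 :=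
        Real.rpow_le_one h1 (by linarith [hF0 x]) hα.le
      have h3 : 0 ≤ (1 - F x) ^ α := Real.rpow_nonneg h1 α
      rw [Real.norm_eq_abs, abs_of_nonneg (mul_nonneg (hF0 x) h3)]
      calc F x * (1 - F x) ^ α ≤ 1 * 1 :=
          mul_le_mul (hF1 x) h2 h3 zero_le_one
        _ = 1 := one_mul 1
  have hint : (∫ x in Set.Ioo (0:ℝ) l, F x * (1 - F x) ^ α)
      ≤ ∫ x in Set.Ioo (0:ℝ) l, F x * (-Real.log (F x)) ^ α :=
    setIntegral_mono_on hgint hCEfin measurableSet_Ioo (fun x _ => hpt x)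
  have hΓ : 0 < Real.Gamma (α + 1) := Real.Gamma_pos_of_pos (by linarith)
  exact mul_le_mul_of_nonneg_left hint (by positivity)
end

section
/- Let X be a random variable with bounded support (0,l), cumulative distribution function F, and finite CE_α(X). Then for every 0 < α ≤ 1, CE_α(X) ≤ (l/Γ(α+1)) (α/e)^α. -/
open MeasureTheory Set
open scoped ProbabilityTheory

/-!
The integrand is `u (-log u)^α` with `u = F x ∈ [0, 1]`. Substituting `u = exp (-t)` it becomes
`t^α exp (-t)`, which is maximal at `t = α` with value `(α / e)^α`; integrating this pointwise
bound over `(0, l)` gives the claim.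
-/

namespace Real

theorem rpow_mul_exp_neg_le {α t : ℝ} (hα : 0 < α) (ht : 0 ≤ t) :
    t ^ α * exp (-t) ≤ (α / exp 1) ^ α := by
  -- `x ≤ exp (x - 1)` at `x = t / α`, raised to the power `α`
  have hratio : (t / α) ^ α ≤ exp (t - α) := by
    calc (t / α) ^ α ≤ exp (t / α - 1) ^ α := by
          gcongr
          linarith [add_one_le_exp (t / α - 1)]
      _ = exp (t - α) := by rw [← exp_mul]; field_simp
  calc t ^ α * exp (-t) = α ^ α * (t / α) ^ α * exp (-t) := by
        rw [div_rpow ht hα.le]; field_simp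
    _ ≤ α ^ α * exp (t - α) * exp (-t) := by gcongr
    _ = (α / exp 1) ^ α := by
        rw [div_rpow hα.le (exp_pos 1).le, exp_one_rpow, mul_assoc, ← exp_add, div_eq_mul_inv,
          ← exp_neg]
        ring_nf

theorem mul_neg_log_rpow_le {α u : ℝ} (hα : 0 < α) (hu0 : 0 ≤ u) (hu1 : u ≤ 1) :
    u * (-log u) ^ α ≤ (α / exp 1) ^ α := by
  rcases hu0.eq_or_lt with rfl | hu0
  · rw [zero_mul]; positivity
  have hlog : 0 ≤ -log u := neg_nonneg.mpr (log_nonpos hu0.le hu1)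
  simpa [exp_log hu0, mul_comm] using rpow_mul_exp_neg_le hα hlog

end Real

theorem setIntegral_Ioo_le_mul_of_le {f : ℝ → ℝ} {a b C : ℝ} (hab : a ≤ b)
    (hf : IntegrableOn f (Ioo a b)) (hfC : ∀ x ∈ Ioo a b, f x ≤ C) :
    ∫ x in Ioo a b, f x ≤ (b - a) * C := by
  calc ∫ x in Ioo a b, f x ≤ ∫ _ in Ioo a b, C :=
        setIntegral_mono_on hf (integrableOn_const measure_Ioo_lt_top.ne) measurableSet_Ioo hfC
    _ = (b - a) * C := by
        rw [setIntegral_const, measureReal_def, Real.volume_Ioo, smul_eq_mul,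
          ENNReal.toReal_ofReal (sub_nonneg.mpr hab)]

theorem fgce_upper_bound_general
    {Ω : Type*} [MeasureSpace Ω] [IsProbabilityMeasure (ℙ : Measure Ω)]
    (X : Ω → ℝ)
    (l : ℝ) (hl : 0 < l)
    (F : ℝ → ℝ) (hF : ∀ x, F x = (ℙ {ω | X ω ≤ x}).toReal)
    (α : ℝ) (hα : 0 < α)
    (hCEfin : IntegrableOn (fun x => F x * (-Real.log (F x)) ^ α) (Set.Ioo (0:ℝ) l)) :
    (1 / Real.Gamma (α + 1)) * ∫ x in Set.Ioo (0:ℝ) l, F x * (-Real.log (F x)) ^ α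
      ≤ l / Real.Gamma (α + 1) * (α / Real.exp 1) ^ α := by
  have hF01 : ∀ x, 0 ≤ F x ∧ F x ≤ 1 := fun x =>
    hF x ▸ ⟨ENNReal.toReal_nonneg, ENNReal.toReal_le_of_le_ofReal zero_le_one (by simpa using prob_le_one)⟩
  have hintegral : ∫ x in Ioo 0 l, F x * (-Real.log (F x)) ^ α ≤ l * (α / Real.exp 1) ^ α := by
    simpa using setIntegral_Ioo_le_mul_of_le hl.le hCEfin
      fun x _ => Real.mul_neg_log_rpow_le hα (hF01 x).1 (hF01 x).2
  have hΓ : 0 < Real.Gamma (α + 1) := Real.Gamma_pos_of_pos (by linarith)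
  calc (1 / Real.Gamma (α + 1)) * ∫ x in Ioo 0 l, F x * (-Real.log (F x)) ^ α
      ≤ 1 / Real.Gamma (α + 1) * (l * (α / Real.exp 1) ^ α) := by gcongr
    _ = l / Real.Gamma (α + 1) * (α / Real.exp 1) ^ α := by ring

/-- for a random variable `X` with bounded support `(0,l)`, CDF `F`, and
finite `CE_α(X)`, for every `0 < α ≤ 1` one has
`CE_α(X) ≤ (l/Γ(α+1)) (α/e)^α`. -/
theorem fgce_upper_bound
    {Ω : Type*} [MeasureSpace Ω] [IsProbabilityMeasure (ℙ : Measure Ω)]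
    (X : Ω → ℝ) (hX : Measurable X)
    (l : ℝ) (hl : 0 < l)
    (hsupp : ∀ᵐ ω ∂ℙ, X ω ∈ Set.Ioo 0 l)
    (F : ℝ → ℝ) (hF : ∀ x, F x = (ℙ {ω | X ω ≤ x}).toReal)
    (α : ℝ) (hα : 0 < α) (hα1 : α ≤ 1)
    (hCEfin : IntegrableOn (fun x => F x * (-Real.log (F x)) ^ α) (Set.Ioo (0:ℝ) l)) :
    (1 / Real.Gamma (α + 1)) * ∫ x in Set.Ioo (0:ℝ) l, F x * (-Real.log (F x)) ^ α
      ≤ l / Real.Gamma (α + 1) * (α / Real.exp 1) ^ α :=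
  fgce_upper_bound_general X l hl F hF α hα hCEfin
end

section
/- Let X be a nonnegative random variable with support (0,l) and cumulative distribution function F, and let Y = cX + b with c > 0 and b ≥ 0. Then for all α > 0 and all t ∈ (b, b + c·l), the dynamic fractional generalized cumulative entropies satisfy CE_α(cX + b; t) = c · CE_α(X; (t − b)/c). -/
open MeasureTheory Set
open scoped ProbabilityTheory

/-- The cumulative distribution function of a random variable. -/
noncomputable def cdfRV {Ω : Type*} [MeasureSpace Ω] (X : Ω → ℝ) (x : ℝ) : ℝ :=
  (ℙ {ω | X ω ≤ x}).toReal

/-- The dynamic fractional generalized cumulative entropy associated with a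
distribution function `F`:
`CE_α(X;t) = (1/Γ(α+1)) ∫_0^t (F(x)/F(t)) (−ln(F(x)/F(t)))^α dx`. -/
noncomputable def dfgce (F : ℝ → ℝ) (α t : ℝ) : ℝ :=
  (1 / Real.Gamma (α + 1)) *
    ∫ x in Set.Ioo (0:ℝ) t, (F x / F t) * (-Real.log (F x / F t)) ^ α

/-- for a nonnegative random variable `X` with support `(0,l)` and CDF `F`,
and `Y = cX + b` with `c > 0`, `b ≥ 0`, for every `α > 0` and `t ∈ (b, b + c·l)`,
`CE_α(cX + b; t) = c · CE_α(X; (t − b)/c)`. -/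
theorem dfgce_affine
    {Ω : Type*} [MeasureSpace Ω] [IsProbabilityMeasure (ℙ : Measure Ω)]
    (X : Ω → ℝ) (hX : Measurable X)
    (l : ℝ) (hl : 0 < l)
    (hXnn : ∀ ω, 0 ≤ X ω)
    (hsupp : ∀ᵐ ω ∂ℙ, X ω ∈ Set.Ioo 0 l)
    (c b : ℝ) (hc : 0 < c) (hb : 0 ≤ b)
    (α : ℝ) (hα : 0 < α)
    (t : ℝ) (ht : t ∈ Set.Ioo b (b + c * l)) :
    dfgce (cdfRV (fun ω => c * X ω + b)) α t = c * dfgce (cdfRV X) α ((t - b) / c) := by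
  obtain ⟨htb, htl⟩ := ht
  have h0t : (0:ℝ) < t := lt_of_le_of_lt hb htb
  set s : ℝ := (t - b) / c with hs
  have hs0 : 0 < s := div_pos (by linarith) hc
  set F : ℝ → ℝ := cdfRV X with hFdef
  -- the CDF of the affine transform
  have hGx : ∀ x, cdfRV (fun ω => c * X ω + b) x = F ((x - b) / c) := by
    intro x
    unfold cdfRV
    have hset : {ω | c * X ω + b ≤ x} = {ω | X ω ≤ (x - b) / c} := by
      ext ω
      simp only [Set.mem_setOf_eq, le_div_iff₀ hc]
      constructor <;> intro h <;> linarith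
    rw [hset]; rfl
  -- F vanishes on nonpositive reals
  have hF0 : ∀ y : ℝ, y ≤ 0 → F y = 0 := by
    intro y hy
    have hnull : ℙ {ω | ¬ X ω ∈ Set.Ioo (0:ℝ) l} = 0 := by
      rw [← MeasureTheory.ae_iff]; exact hsupp
    have hsub : {ω | X ω ≤ y} ⊆ {ω | ¬ X ω ∈ Set.Ioo (0:ℝ) l} := by
      intro ω hω
      simp only [Set.mem_setOf_eq, Set.mem_Ioo, not_and] at *
      intro h0; linarith
    have : ℙ {ω | X ω ≤ y} = 0 := measure_mono_null hsub hnull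
    simp [hFdef, cdfRV, this]
  set f : ℝ → ℝ := fun u => F u / F s * (-Real.log (F u / F s)) ^ α with hfdef
  have hf0 : ∀ x : ℝ, x ≤ b → f ((x - b) / c) = 0 := by
    intro x hx
    have : F ((x - b) / c) = 0 :=
      hF0 _ (div_nonpos_of_nonpos_of_nonneg (by linarith) hc.le)
    simp [hfdef, this]
  unfold dfgce
  simp only [hGx, ← hs]
  have key : (∫ x in Set.Ioo (0:ℝ) t, f ((x - b) / c)) = c * ∫ x in Set.Ioo (0:ℝ) s, f x := by
    have step1 : (∫ x in Set.Ioo (0:ℝ) t, f ((x - b) / c))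
        = ∫ x in Set.Ioo b t, f ((x - b) / c) := by
      rw [← MeasureTheory.integral_indicator measurableSet_Ioo,
        ← MeasureTheory.integral_indicator measurableSet_Ioo]
      congr 1
      funext x
      simp only [Set.indicator_apply, Set.mem_Ioo]
      by_cases hxb : b < x
      · have : 0 < x := lt_of_le_of_lt hb hxb
        by_cases hxt : x < t <;> simp [hxb, hxt, this]
      · push_neg at hxb
        have hz := hf0 x hxb
        simp [hz, hxb.not_gt]
    have step2 : (∫ x in Set.Ioo b t, f ((x - b) / c))
        = ∫ x in b..t, f ((x - b) / c) := by
      rw [intervalIntegral.integral_of_le htb.le,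
        MeasureTheory.integral_Ioc_eq_integral_Ioo]
    have step3 : (∫ x in b..t, f ((x - b) / c)) = c * ∫ x in (0:ℝ)..s, f x := by
      have h1 : (∫ x in b..t, (fun y => f (y / c)) (x - b))
          = ∫ x in (b - b)..(t - b), f (x / c) :=
        intervalIntegral.integral_comp_sub_right (fun y => f (y / c)) b
      have h2 : (∫ x in (b - b)..(t - b), f (x / c))
          = c • ∫ x in (b - b) / c..(t - b) / c, f x :=
        intervalIntegral.integral_comp_div f hc.ne'
      simp only [sub_self, zero_div] at h1 h2
      rw [h1, h2, smul_eq_mul, ← hs]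
    have step4 : (∫ x in (0:ℝ)..s, f x) = ∫ x in Set.Ioo (0:ℝ) s, f x := by
      rw [intervalIntegral.integral_of_le hs0.le,
        MeasureTheory.integral_Ioc_eq_integral_Ioo]
    rw [step1, step2, step3, step4]
  rw [key]; ring
end

section
/- Let X be a nonnegative random variable with support (0,l) and cumulative distribution function F, and let Y = cX + b with c > 0 and b ≥ 0. If X is IDFCE, i.e. t ↦ CE_α(X; t) is increasing in t on (0,l), then Y is IDFCE, i.e. t ↦ CE_α(Y; t) is increasing in t on (b, b + c·l). -/
open MeasureTheory Set
open scoped ProbabilityTheory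

/-- for a nonnegative random variable `X` with support `(0,l)` and
`Y = cX + b` with `c > 0`, `b ≥ 0`: if `X` is IDFCE (i.e. `t ↦ CE_α(X;t)` is increasing
on `(0,l)`), then `Y` is IDFCE (i.e. `t ↦ CE_α(Y;t)` is increasing on `(b, b + c·l)`). -/
theorem dfgce_IDFCE_affine
    {Ω : Type*} [MeasureSpace Ω] [IsProbabilityMeasure (ℙ : Measure Ω)]
    (X : Ω → ℝ) (hX : Measurable X)
    (l : ℝ) (hl : 0 < l)
    (hXnn : ∀ ω, 0 ≤ X ω)
    (hsupp : ∀ᵐ ω ∂ℙ, X ω ∈ Set.Ioo 0 l)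
    (c b : ℝ) (hc : 0 < c) (hb : 0 ≤ b)
    (α : ℝ) (hα : 0 < α)
    (hIDFCE : MonotoneOn (fun t => dfgce (cdfRV X) α t) (Set.Ioo (0:ℝ) l)) :
    MonotoneOn (fun t => dfgce (cdfRV (fun ω => c * X ω + b)) α t)
      (Set.Ioo b (b + c * l)) := by
  have hc' : (c : ℝ) ≠ 0 := ne_of_gt hc
  -- cdf of X vanishes on nonpositive reals
  have hF0 : ∀ s : ℝ, s ≤ 0 → cdfRV X s = 0 := by
    intro s hs
    have h0 : ℙ {ω | ¬ X ω ∈ Set.Ioo 0 l} = 0 := ae_iff.mp hsupp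
    have hsub : {ω | X ω ≤ s} ⊆ {ω | ¬ X ω ∈ Set.Ioo 0 l} := by
      intro ω hω
      simp only [Set.mem_setOf_eq, Set.mem_Ioo, not_and, not_lt] at hω ⊢
      intro hpos
      exact absurd (lt_of_lt_of_le hpos (le_trans hω hs)) (lt_irrefl 0)
    have : ℙ {ω | X ω ≤ s} = 0 := measure_mono_null hsub h0
    simp [cdfRV, this]
  -- cdf of Y in terms of cdf of X
  have hFY : ∀ t : ℝ, cdfRV (fun ω => c * X ω + b) t = cdfRV X ((t - b) / c) := by
    intro t
    unfold cdfRV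
    congr 2
    ext ω
    simp only [Set.mem_setOf_eq]
    rw [le_div_iff₀ hc]
    constructor <;> intro h <;> nlinarith
  -- key scaling identity
  have key : ∀ t : ℝ, b ≤ t →
      dfgce (cdfRV (fun ω => c * X ω + b)) α t = c * dfgce (cdfRV X) α ((t - b) / c) := by
    intro t hbt
    unfold dfgce
    simp only [hFY]
    set F := cdfRV X with hF
    set t' := (t - b) / c with ht'
    set g : ℝ → ℝ := fun u => (F u / F t') * (-Real.log (F u / F t')) ^ α with hg
    have hzero : ∀ u : ℝ, u ≤ 0 → g u = 0 := by
      intro u hu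
      simp [hg, hF0 u hu]
    -- the integrand as a function of x
    have step1 : (∫ x in Set.Ioo (0:ℝ) t, g ((x - b) / c)) =
        ∫ x in Set.Ioo b t, g ((x - b) / c) := by
      have heq : Set.EqOn (fun x => g ((x - b) / c))
          ((Set.Ioi b).indicator (fun x => g ((x - b) / c))) (Set.Ioo (0:ℝ) t) := by
        intro x hx
        show g ((x - b) / c) = (Set.Ioi b).indicator (fun x => g ((x - b) / c)) x
        by_cases hxb : b < x
        · rw [Set.indicator_of_mem (Set.mem_Ioi.mpr hxb)]
        · push_neg at hxb
          have h2 : (x - b) / c ≤ 0 := div_nonpos_of_nonpos_of_nonneg (by linarith) hc.le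
          rw [Set.indicator_of_notMem (Set.notMem_Ioi.mpr hxb), hzero _ h2]
      rw [setIntegral_congr_fun measurableSet_Ioo heq,
        setIntegral_indicator measurableSet_Ioi]
      have hset : Set.Ioo (0:ℝ) t ∩ Set.Ioi b = Set.Ioo b t := by
        ext x
        simp only [Set.mem_inter_iff, Set.mem_Ioo, Set.mem_Ioi]
        constructor
        · rintro ⟨⟨_, hxt⟩, hbx⟩; exact ⟨hbx, hxt⟩
        · rintro ⟨hbx, hxt⟩; exact ⟨⟨lt_of_le_of_lt hb hbx, hxt⟩, hbx⟩
      rw [hset]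
    have step2 : (∫ x in Set.Ioo b t, g ((x - b) / c)) =
        c * ∫ u in Set.Ioo (0:ℝ) t', g u := by
      have h1 : (∫ x in Set.Ioo b t, g ((x - b) / c)) =
          ∫ x in b..t, g (x / c - b / c) := by
        rw [intervalIntegral.integral_of_le hbt, integral_Ioc_eq_integral_Ioo]
        apply setIntegral_congr_fun measurableSet_Ioo
        intro x _
        show g ((x - b) / c) = g (x / c - b / c)
        rw [sub_div]
      rw [h1, intervalIntegral.integral_comp_div_sub g hc' (b / c)]
      have hbb : b / c - b / c = 0 := sub_self _
      have htt : t / c - b / c = t' := by rw [ht', sub_div]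
      rw [hbb, htt, intervalIntegral.integral_of_le, integral_Ioc_eq_integral_Ioo,
        smul_eq_mul]
      exact div_nonneg (by linarith) hc.le
    rw [step1, step2]
    ring
  -- conclude monotonicity
  intro s hs t ht hst
  simp only [Set.mem_Ioo] at hs ht
  have hkey_s := key s hs.1.le
  have hkey_t := key t ht.1.le
  simp only [hkey_s, hkey_t]
  have hmem : ∀ u : ℝ, b < u → u < b + c * l → (u - b) / c ∈ Set.Ioo (0:ℝ) l := by
    intro u h1 h2
    constructor
    · exact div_pos (by linarith) hc
    · rw [div_lt_iff₀ hc]; linarith [mul_comm l c]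
  have hle : (s - b) / c ≤ (t - b) / c := by gcongr <;> linarith
  exact mul_le_mul_of_nonneg_left
    (hIDFCE (hmem s hs.1 hs.2) (hmem t ht.1 ht.2) hle) hc.le
end

section
/- Let X be a random variable with support (0,l), cumulative distribution function F, and finite CE_α(X; t). Then for every α > 0 and t ∈ (0,l), CE_α(X; t) ≥ (1/Γ(α+1)) ∫_0^t (F(x)/F(t)) (1 − F(x)/F(t))^α dx. -/
open MeasureTheory Set
open scoped ProbabilityTheory

/-- for a random variable `X` with support `(0,l)`, CDF `F`, and finite
dynamic fractional generalized cumulative entropy `CE_α(X;t)`, for every `α > 0` and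
`t ∈ (0,l)`:
`CE_α(X;t) ≥ (1/Γ(α+1)) ∫_0^t (F(x)/F(t)) (1 − F(x)/F(t))^α dx`. -/
theorem dfgce_lower_bound
    {Ω : Type*} [MeasureSpace Ω] [IsProbabilityMeasure (ℙ : Measure Ω)]
    (X : Ω → ℝ) (hX : Measurable X)
    (l : ℝ) (hl : 0 < l)
    (hsupp : ∀ᵐ ω ∂ℙ, X ω ∈ Set.Ioo 0 l)
    (F : ℝ → ℝ) (hF : ∀ x, F x = (ℙ {ω | X ω ≤ x}).toReal)
    (α : ℝ) (hα : 0 < α)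
    (t : ℝ) (ht : t ∈ Set.Ioo (0:ℝ) l)
    (hfin : IntegrableOn
      (fun x => (F x / F t) * (-Real.log (F x / F t)) ^ α) (Set.Ioo (0:ℝ) t)) :
    (1 / Real.Gamma (α + 1)) *
        ∫ x in Set.Ioo (0:ℝ) t, (F x / F t) * (-Real.log (F x / F t)) ^ α
      ≥ (1 / Real.Gamma (α + 1)) *
          ∫ x in Set.Ioo (0:ℝ) t, (F x / F t) * (1 - F x / F t) ^ α := by
  have hFmono : Monotone F := by
    intro a b hab
    rw [hF a, hF b]
    exact ENNReal.toReal_mono (measure_ne_top _ _)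
      (measure_mono (fun ω hω => le_trans hω hab))
  have hF0 : ∀ x, 0 ≤ F x := fun x => by rw [hF x]; exact ENNReal.toReal_nonneg
  -- basic facts about u = F x / F t for x ∈ Ioo 0 t
  have hu0 : ∀ x, 0 ≤ F x / F t := fun x => div_nonneg (hF0 x) (hF0 t)
  have hu1 : ∀ x ∈ Set.Ioo (0:ℝ) t, F x / F t ≤ 1 := by
    intro x hx
    rcases eq_or_lt_of_le (hF0 t) with h | h
    · simp [← h]
    · exact div_le_one_of_le₀ (hFmono hx.2.le) (hF0 t)
  -- pointwise inequality
  have hpt : ∀ x ∈ Set.Ioo (0:ℝ) t,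
      (F x / F t) * (1 - F x / F t) ^ α ≤ (F x / F t) * (-Real.log (F x / F t)) ^ α := by
    intro x hx
    set u := F x / F t with hu
    rcases eq_or_lt_of_le (hu0 x) with h | h
    · simp [show u = 0 from hu.trans h.symm]
    · have h1 : Real.log u ≤ u - 1 := Real.log_le_sub_one_of_pos h
      have h2 : (0:ℝ) ≤ 1 - u := by linarith [hu1 x hx]
      have h3 : 1 - u ≤ -Real.log u := by linarith
      exact mul_le_mul_of_nonneg_left (Real.rpow_le_rpow h2 h3 hα.le) h.le
  -- integrability of the lower integrand
  have hFmeas : Measurable F := hFmono.measurable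
  have hg : IntegrableOn (fun x => (F x / F t) * (1 - F x / F t) ^ α)
      (Set.Ioo (0:ℝ) t) := by
    apply Measure.integrableOn_of_bounded (M := 1)
    · exact (measure_Ioo_lt_top).ne
    · exact ((hFmeas.div_const _).mul
        ((Real.continuous_rpow_const hα.le).measurable.comp
          (measurable_const.sub (hFmeas.div_const _)))).aestronglyMeasurable
    · filter_upwards [ae_restrict_mem measurableSet_Ioo] with x hx
      have h2 : (0:ℝ) ≤ 1 - F x / F t := by linarith [hu1 x hx]
      have h4 : (1 - F x / F t) ^ α ≤ 1 :=
        Real.rpow_le_one h2 (by linarith [hu0 x]) hα.le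
      rw [Real.norm_eq_abs, abs_of_nonneg (mul_nonneg (hu0 x) (Real.rpow_nonneg h2 _))]
      calc (F x / F t) * (1 - F x / F t) ^ α ≤ 1 * 1 :=
            mul_le_mul (hu1 x hx) h4 (Real.rpow_nonneg h2 _) zero_le_one
        _ = 1 := one_mul 1
  have hΓ : (0:ℝ) ≤ 1 / Real.Gamma (α + 1) :=
    one_div_nonneg.mpr (Real.Gamma_pos_of_pos (by linarith)).le
  have hint := setIntegral_mono_on hg hfin measurableSet_Ioo hpt
  exact ge_iff_le.mpr (mul_le_mul_of_nonneg_left hint hΓ)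
end

section
/- Let X be a random variable with support (0,l) and cumulative distribution function F, and for θ > 0 let X_θ have cumulative distribution function F_θ(x) = [F(x)]^θ (proportional reversed hazard model), so that CE_α(X_θ; t) = (θ^α/Γ(α+1)) ∫_0^t (F(x)/F(t))^θ [−ln(F(x)/F(t))]^α dx. Then for all α > 0 and t ∈ (0,l): if 0 < θ ≤ 1 then CE_α(X_θ; t) ≥ θ^α CE_α(X; t), and if θ ≥ 1 then CE_α(X_θ; t) ≤ θ^α CE_α(X; t). -/
open MeasureTheory Set
open scoped ProbabilityTheory

/-- let `X` have support `(0,l)` and CDF `F`, and for `θ > 0` let `X_θ`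
satisfy the proportional reversed hazard model `F_θ = F^θ`, so that
`CE_α(X_θ;t) = (θ^α/Γ(α+1)) ∫_0^t (F(x)/F(t))^θ (−ln(F(x)/F(t)))^α dx`.
Then for all `α > 0` and `t ∈ (0,l)`: if `0 < θ ≤ 1` then
`CE_α(X_θ;t) ≥ θ^α CE_α(X;t)`, and if `θ ≥ 1` then `CE_α(X_θ;t) ≤ θ^α CE_α(X;t)`. -/
theorem dfgce_prhm_bounds
    {Ω : Type*} [MeasureSpace Ω] [IsProbabilityMeasure (ℙ : Measure Ω)]
    (X : Ω → ℝ) (hX : Measurable X)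
    (l : ℝ) (hl : 0 < l)
    (hsupp : ∀ᵐ ω ∂ℙ, X ω ∈ Set.Ioo 0 l)
    (F : ℝ → ℝ) (hF : ∀ x, F x = (ℙ {ω | X ω ≤ x}).toReal)
    (θ : ℝ) (hθ : 0 < θ)
    (α : ℝ) (hα : 0 < α)
    (t : ℝ) (ht : t ∈ Set.Ioo (0:ℝ) l)
    (hfin : IntegrableOn
      (fun x => (F x / F t) * (-Real.log (F x / F t)) ^ α) (Set.Ioo (0:ℝ) t))
    (hfinθ : IntegrableOn
      (fun x => (F x / F t) ^ θ * (-Real.log (F x / F t)) ^ α) (Set.Ioo (0:ℝ) t)) :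
    (θ ≤ 1 →
      θ ^ α / Real.Gamma (α + 1) *
          ∫ x in Set.Ioo (0:ℝ) t, (F x / F t) ^ θ * (-Real.log (F x / F t)) ^ α
        ≥ θ ^ α * ((1 / Real.Gamma (α + 1)) *
            ∫ x in Set.Ioo (0:ℝ) t, (F x / F t) * (-Real.log (F x / F t)) ^ α))
    ∧ (1 ≤ θ →
      θ ^ α / Real.Gamma (α + 1) *
          ∫ x in Set.Ioo (0:ℝ) t, (F x / F t) ^ θ * (-Real.log (F x / F t)) ^ α
        ≤ θ ^ α * ((1 / Real.Gamma (α + 1)) *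
            ∫ x in Set.Ioo (0:ℝ) t, (F x / F t) * (-Real.log (F x / F t)) ^ α)) := by

  -- ratio bounds
  have hF0 : ∀ x, 0 ≤ F x := fun x => by rw [hF]; exact ENNReal.toReal_nonneg
  have hFmono : ∀ x, x ≤ t → F x ≤ F t := fun x hx => by
    rw [hF, hF]
    exact ENNReal.toReal_mono (measure_ne_top _ _)
      (measure_mono (fun ω h => le_trans h hx))
  have hr : ∀ x ∈ Set.Ioo (0:ℝ) t, 0 ≤ F x / F t ∧ F x / F t ≤ 1 := by
    intro x hx
    refine ⟨div_nonneg (hF0 x) (hF0 t), div_le_one_of_le₀ (hFmono x hx.2.le) (hF0 t)⟩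
  have hlog : ∀ x ∈ Set.Ioo (0:ℝ) t, 0 ≤ (-Real.log (F x / F t)) ^ α := by
    intro x hx
    exact Real.rpow_nonneg (neg_nonneg.2 (Real.log_nonpos (hr x hx).1 (hr x hx).2)) α
  have hG : 0 < Real.Gamma (α + 1) := Real.Gamma_pos_of_pos (by linarith)
  have hθα : 0 < θ ^ α := Real.rpow_pos_of_pos hθ α
  have hc : 0 < θ ^ α / Real.Gamma (α + 1) := div_pos hθα hG
  constructor
  · intro hθ1
    have hpt : ∀ x ∈ Set.Ioo (0:ℝ) t,
        (F x / F t) * (-Real.log (F x / F t)) ^ α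
          ≤ (F x / F t) ^ θ * (-Real.log (F x / F t)) ^ α := by
      intro x hx
      refine mul_le_mul_of_nonneg_right ?_ (hlog x hx)
      rcases eq_or_lt_of_le (hr x hx).1 with h0 | h0
      · rw [← h0, Real.zero_rpow hθ.ne']
      · calc F x / F t = (F x / F t) ^ (1:ℝ) := (Real.rpow_one _).symm
          _ ≤ (F x / F t) ^ θ :=
            Real.rpow_le_rpow_of_exponent_ge h0 (hr x hx).2 hθ1
    have hI : (∫ x in Set.Ioo (0:ℝ) t, (F x / F t) * (-Real.log (F x / F t)) ^ α)
        ≤ ∫ x in Set.Ioo (0:ℝ) t, (F x / F t) ^ θ * (-Real.log (F x / F t)) ^ α :=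
      setIntegral_mono_on hfin hfinθ measurableSet_Ioo hpt
    have : θ ^ α * ((1 / Real.Gamma (α + 1)) *
        ∫ x in Set.Ioo (0:ℝ) t, (F x / F t) * (-Real.log (F x / F t)) ^ α)
        = θ ^ α / Real.Gamma (α + 1) *
          ∫ x in Set.Ioo (0:ℝ) t, (F x / F t) * (-Real.log (F x / F t)) ^ α := by ring
    rw [ge_iff_le, this]
    exact mul_le_mul_of_nonneg_left hI hc.le
  · intro hθ1
    have hpt : ∀ x ∈ Set.Ioo (0:ℝ) t,
        (F x / F t) ^ θ * (-Real.log (F x / F t)) ^ α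
          ≤ (F x / F t) * (-Real.log (F x / F t)) ^ α := by
      intro x hx
      refine mul_le_mul_of_nonneg_right ?_ (hlog x hx)
      rcases eq_or_lt_of_le (hr x hx).1 with h0 | h0
      · rw [← h0, Real.zero_rpow hθ.ne']
      · calc (F x / F t) ^ θ ≤ (F x / F t) ^ (1:ℝ) :=
            Real.rpow_le_rpow_of_exponent_ge h0 (hr x hx).2 hθ1
          _ = F x / F t := Real.rpow_one _
    have hI : (∫ x in Set.Ioo (0:ℝ) t, (F x / F t) ^ θ * (-Real.log (F x / F t)) ^ α)
        ≤ ∫ x in Set.Ioo (0:ℝ) t, (F x / F t) * (-Real.log (F x / F t)) ^ α :=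
      setIntegral_mono_on hfinθ hfin measurableSet_Ioo hpt
    have heq : θ ^ α * ((1 / Real.Gamma (α + 1)) *
        ∫ x in Set.Ioo (0:ℝ) t, (F x / F t) * (-Real.log (F x / F t)) ^ α)
        = θ ^ α / Real.Gamma (α + 1) *
          ∫ x in Set.Ioo (0:ℝ) t, (F x / F t) * (-Real.log (F x / F t)) ^ α := by ring
    rw [heq]
    exact mul_le_mul_of_nonneg_left hI hc.le
end
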